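/- Let R_{N=1} = ℂ[D]⊗span{ū_i}_{i∈I} ⊕ E_C be an N=1 SUSY Lie conformal algebra with {Dū_i, ū_i} linearly independent and D E_C = 0, viewed as a non-SUSY Lie conformal algebra R = ℂ[∂]⊗span{u_i, ū_i} ⊕ E_C (u_i := Dū_i) with SUSY generator {ū_i} in the D-direction. Form R̃ = R ⊕ R° via the Theorem-5.4 construction (R° a parity-reversed ghost copy with [x°_λ y] = [x_λ y]°, [x_λ y°] = (-1)^{p(x)}[x_λ y]°, [x°_λ y°] = 0, and D° the corresponding odd derivation). Define D¹ on R̃ by D¹(u_i) = D(u_i), D¹(ū_i) = D(ū_i), D¹(u°_i) = (-D(u_i))°, D¹(ū°_i) = (-D(ū_i))°, and D² := D°. Then the pair ({ū_i, ū°_i}_{i∈I}, D¹) satisfies the supersymmetric extension formulas (SEF1) and (SEF2); in particular [u_i _λ u°_j] = (-1)^{p(u_i)+1}(D¹[u_i _λ ū°_j] + λ[ū_i _λ ū°_j]) and [ū_i _λ u°_j] = (-1)^{p(u_i)+1}([u_i _λ ū°_j] - D¹[ū_i _λ ū°_j]). -/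

import Mathlib

/-!
On `R` the operator `D¹` is `D` and brackets stay in `R`, so (SEF) for two elements of `R` is the
hypothesis. A ghost enters a bracket only through `[x°_λ y] = [x_λ y]°` and
`[x_λ y°] = (-1)^{p(x)}[x_λ y]°`, and `D¹` acts on `R°` as `-D` transported by `°`. Hence (SEF)
for a pair with one ghost is the image under `°` of (SEF) in `R`: the signs `(-1)^{p(x)}` either
occur squared or combine with `(-1)^{p(x°)} = -(-1)^{p(x)}`. Two ghosts have zero bracket, so
there (SEF) reads `0 = 0`.
-/

open scoped BigOperators
noncomputable section

namespace VAx

/-- `(-1)^p` for a parity `p` (`true` = odd). -/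
def psgn (p : Bool) : ℂ := if p then -1 else 1

/-- `(-1)^{pq}` for parities `p`, `q`. -/
def sgn (p q : Bool) : ℂ := if p && q then -1 else 1

/-- Multiplication by `λ` on a `λ`-expansion `f = ∑ λ^m • f m`. -/
def lam {W : Type*} [AddCommGroup W] (f : ℕ → W) : ℕ → W :=
  fun m => match m with
  | 0 => 0
  | n + 1 => f n

variable (V : Type*) [AddCommGroup V] [Module ℂ V]

/-- Underlying data of a (super) Lie conformal algebra: a `ℤ/2ℤ`-grading (`part false` the
even part, `part true` the odd part), an even derivation `∂ = der`, and a `λ`-bracket encoded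
by its coefficients: `[a_λ b] = ∑_m λ^m • B a b m` (so `B a b m = a_{(m)} b / m!`). -/
structure LCAData where
  part : Bool → Submodule ℂ V
  der : V →ₗ[ℂ] V
  B : V →ₗ[ℂ] V →ₗ[ℂ] (ℕ → V)

/-- Underlying data of a vertex algebra: a Lie conformal algebra datum together with a
vacuum vector and the normally ordered product. -/
structure VAData extends LCAData V where
  one : V
  M : V →ₗ[ℂ] V →ₗ[ℂ] V

variable {V}

namespace LCAData

variable (S : LCAData V)

/-- Coefficientwise form of the Jacobi identity
`[a_λ [b_γ c]] = [[a_λ b]_{λ+γ} c] + (-1)^{p(a)p(b)} [b_γ [a_λ c]]`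
at the coefficient of `λ^m γ^n`. -/
def JacEq (p q : Bool) (a b c : V) (m n : ℕ) : Prop :=
  S.B a (S.B b c n) m =
    (∑ j ∈ Finset.range (m + 1),
      ((Nat.choose (m - j + n) (m - j) : ℂ)) • S.B (S.B a b j) c (m - j + n))
    + sgn p q • S.B b (S.B a c m) n

/-- Coefficientwise form of skew-symmetry `[b_λ a] = (-1)^{p(a)p(b)+1}[a_{-∂-λ} b]`,
given a bound `N` on the support of `[a_λ b]`. -/
def SkewEq (p q : Bool) (a b : V) (N : ℕ) : Prop :=
  ∀ k, S.B b a k = (- sgn p q) •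
    ∑ m ∈ Finset.Icc k N, (((-1 : ℂ)) ^ m * (m.choose k : ℂ)) • ((S.der ^ (m - k)) (S.B a b m))

/-- The axioms of a (super) Lie conformal algebra, expressed coefficientwise on the
`λ`-expansion `[a_λ b] = ∑ λ^m • B a b m`. -/
structure IsLCA : Prop where
  hom_der : ∀ p, ∀ a ∈ S.part p, S.der a ∈ S.part p
  hom_B : ∀ p q a b, a ∈ S.part p → b ∈ S.part q → ∀ m, S.B a b m ∈ S.part (xor p q)
  sesq1 : ∀ a b, S.B (S.der a) b 0 = 0 ∧ ∀ m, S.B (S.der a) b (m + 1) = - S.B a b m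
  sesq2 : ∀ a b, S.B a (S.der b) 0 = S.der (S.B a b 0) ∧
    ∀ m, S.B a (S.der b) (m + 1) = S.der (S.B a b (m + 1)) + S.B a b m
  bfin : ∀ a b, ∃ N, ∀ m, N ≤ m → S.B a b m = 0
  skew : ∀ p q a b N, a ∈ S.part p → b ∈ S.part q →
    (∀ m, N ≤ m → S.B a b m = 0) → S.SkewEq p q a b N
  jacobi : ∀ p q a b c, a ∈ S.part p → b ∈ S.part q → ∀ m n, S.JacEq p q a b c m n

/-- The supersymmetric extension formulas (SEF1) and (SEF2) for the ordered pair `(x, y)`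
(thought of as `(ā, b̄)`), where `p` is the parity of `x` and `D` is the odd endomorphism:
(SEF1) `[Dx_λ Dy] = (-1)^{p(x)+1}(D[Dx_λ y] + λ[x_λ y])`,
(SEF2) `[x_λ Dy] = (-1)^{p(x)+1}([Dx_λ y] - D[x_λ y])`. -/
def SEF (D : Module.End ℂ V) (p : Bool) (x y : V) : Prop :=
  (∀ m, S.B (D x) (D y) m = psgn (!p) • (D (S.B (D x) y m) + lam (S.B x y) m)) ∧
  (∀ m, S.B x (D y) m = psgn (!p) • (S.B (D x) y m - D (S.B x y m)))

end LCAData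

namespace VAData

variable (S : VAData V)

/-- The integral term `∫_0^λ [[a_λ b]_γ c] dγ` of the non-commutative Wick formula, at the
coefficient of `λ^k`, where `f` is the `λ`-expansion of `[a_λ b]`. -/
def wickInt (f : ℕ → V) (c : V) : ℕ → V :=
  fun k => ∑ n ∈ Finset.range k, ((n + 1 : ℂ))⁻¹ • S.B (f (k - 1 - n)) c n

/-- The axioms of a vertex algebra, in the `λ`-bracket formalism, expressed coefficientwise. -/
structure IsVA : Prop where
  isLCA : S.toLCAData.IsLCA
  one_even : S.one ∈ S.part false
  der_one : S.der S.one = 0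
  M_one_left : ∀ a, S.M S.one a = a
  M_one_right : ∀ a, S.M a S.one = a
  B_one_left : ∀ a m, S.B S.one a m = 0
  B_one_right : ∀ a m, S.B a S.one m = 0
  hom_M : ∀ p q a b, a ∈ S.part p → b ∈ S.part q → S.M a b ∈ S.part (xor p q)
  qcomm : ∀ p q a b N, a ∈ S.part p → b ∈ S.part q → (∀ m, N ≤ m → S.B a b m = 0) →
    S.M a b - sgn p q • S.M b a =
      ∑ m ∈ Finset.range (N + 1),
        (((-1 : ℂ) ^ m) * ((m + 1 : ℂ))⁻¹) • ((S.der ^ (m + 1)) (S.B a b m))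
  wick : ∀ p q a b c, a ∈ S.part p → b ∈ S.part q → ∀ k,
    S.B a (S.M b c) k = S.M (S.B a b k) c + sgn p q • S.M b (S.B a c k)
      + S.wickInt (S.B a b) c k

/-- `D` is an odd endomorphism of `V` which is an odd derivation of both the normally ordered
product and the `λ`-bracket. -/
def IsOddDerivation (D : Module.End ℂ V) : Prop :=
  (∀ p, ∀ a ∈ S.part p, D a ∈ S.part (!p)) ∧
  (∀ p a b, a ∈ S.part p → D (S.M a b) = S.M (D a) b + psgn p • S.M a (D b)) ∧
  (∀ p a b m, a ∈ S.part p → D (S.B a b m) = S.B (D a) b m + psgn p • S.B a (D b) m)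

/-- The operator `x ↦ a_{(k)} x` (normalized by `1/k!`). -/
def opAt (a : V) (k : ℕ) : Module.End ℂ V :=
  (LinearMap.proj (R := ℂ) (φ := fun _ : ℕ => V) k).comp (S.B a)

/-- Diagonalizability of an endomorphism. -/
def IsDiag (f : Module.End ℂ V) : Prop :=
  (⨆ μ : ℂ, f.eigenspace μ) = ⊤

/-- `G` is an `N = 1` superconformal vector of `V` with central charge `c`: `G` is odd,
`L := (1/2) G_{(0)} G` is a conformal vector (`L_{(0)} = ∂`, `L_{(1)}` diagonalizable), and the
super-Virasoro relations `[L_λ L] = (∂+2λ)L + (c/12)λ³ |0⟩`, `[L_λ G] = (∂ + (3/2)λ)G`,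
`[G_λ G] = 2L + (c/3)λ² |0⟩` hold. -/
def IsSCV (G : V) (c : ℂ) : Prop :=
  G ∈ S.part true ∧
  S.B G G 1 = 0 ∧
  S.B G G 2 = (c / 3) • S.one ∧
  (∀ m, 3 ≤ m → S.B G G m = 0) ∧
  (S.B ((1 / 2 : ℂ) • S.B G G 0) ((1 / 2 : ℂ) • S.B G G 0) = fun m =>
    match m with
    | 0 => S.der ((1 / 2 : ℂ) • S.B G G 0)
    | 1 => (2 : ℂ) • ((1 / 2 : ℂ) • S.B G G 0)
    | 3 => (c / 12) • S.one
    | _ => 0) ∧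
  (S.B ((1 / 2 : ℂ) • S.B G G 0) G = fun m =>
    match m with
    | 0 => S.der G
    | 1 => (3 / 2 : ℂ) • G
    | _ => 0) ∧
  (∀ x, S.B ((1 / 2 : ℂ) • S.B G G 0) x 0 = S.der x) ∧
  IsDiag (S.opAt ((1 / 2 : ℂ) • S.B G G 0) 1)

/-- The `N = 1` `Λ`-bracket `[a_Λ b] := [Da_λ b] + χ[a_λ b]`, encoded as the pair
`(λ`-expansion of `[Da_λ b]`, `λ`-expansion of `[a_λ b])` (the second component being the
coefficient of `χ`). -/
def SB (D : Module.End ℂ V) (a b : V) : (ℕ → V) × (ℕ → V) :=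
  (S.B (D a) b, S.B a b)

end VAData

end VAx

open VAx VAx.LCAData

namespace VAx

theorem psgn_not (p : Bool) : psgn (!p) = -psgn p := by
  cases p <;> simp [psgn]

theorem psgn_mul_self (p : Bool) : psgn p * psgn p = 1 := by
  cases p <;> simp [psgn]

theorem lam_zero {W : Type*} [AddCommGroup W] (m : ℕ) : lam (0 : ℕ → W) m = 0 := by
  cases m <;> rfl

theorem lam_eq_apply_lam {W W' : Type*} [AddCommGroup W] [AddCommGroup W'] (φ : W → W')
    (hφ : φ 0 = 0) {f : ℕ → W'} {g : ℕ → W} (h : ∀ n, f n = φ (g n)) (m : ℕ) :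
    lam f m = φ (lam g m) := by
  cases m with
  | zero => exact hφ.symm
  | succ n => exact h n

namespace LCAData

variable {V : Type*} [AddCommGroup V] [Module ℂ V]

/-- The ghost extension `R̃ = R ⊕ R°` of Theorem 5.4, with `circ` the map `x ↦ x°`, together with
the odd operator `D¹` acting as `D` on `R` and as `-D` transported by `°` on `R°`. -/
structure IsGhostExtension (S : LCAData V) (R : Bool → Submodule ℂ V) (D D1 : Module.End ℂ V)
    (circ : V →ₗ[ℂ] V) : Prop where
  D_mem : ∀ p x, x ∈ R p → D x ∈ R (!p)
  B_mem : ∀ p q x y, x ∈ R p → y ∈ R q → ∀ m, S.B x y m ∈ R (xor p q)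
  B_circ : ∀ (p : Bool) (x : V), x ∈ R p → ∀ (q : Bool) (y : V), y ∈ R q →
    ∀ m, S.B (circ x) y m = circ (S.B x y m) ∧
      S.B x (circ y) m = psgn p • circ (S.B x y m) ∧
      S.B (circ x) (circ y) m = 0
  D1_apply : ∀ (p : Bool) (x : V), x ∈ R p → D1 x = D x ∧ D1 (circ x) = - circ (D x)

namespace IsGhostExtension

variable {S : LCAData V} {R : Bool → Submodule ℂ V} {D D1 : Module.End ℂ V}
  {circ : V →ₗ[ℂ] V} {p q : Bool} {x y : V}

theorem D1_eq (G : S.IsGhostExtension R D D1 circ) (hx : x ∈ R p) : D1 x = D x :=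
  (G.D1_apply p x hx).1

theorem D1_circ (G : S.IsGhostExtension R D D1 circ) (hx : x ∈ R p) :
    D1 (circ x) = -circ (D x) :=
  (G.D1_apply p x hx).2

theorem B_circ_left (G : S.IsGhostExtension R D D1 circ) (hx : x ∈ R p) (hy : y ∈ R q)
    (m : ℕ) : S.B (circ x) y m = circ (S.B x y m) :=
  (G.B_circ p x hx q y hy m).1

theorem B_circ_right (G : S.IsGhostExtension R D D1 circ) (hx : x ∈ R p) (hy : y ∈ R q)
    (m : ℕ) : S.B x (circ y) m = psgn p • circ (S.B x y m) :=
  (G.B_circ p x hx q y hy m).2.1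

theorem B_circ_circ (G : S.IsGhostExtension R D D1 circ) (hx : x ∈ R p) (hy : y ∈ R q) :
    S.B (circ x) (circ y) = 0 :=
  funext (G.B_circ p x hx q y hy · |>.2.2)

theorem sef (G : S.IsGhostExtension R D D1 circ) (hx : x ∈ R p) (hy : y ∈ R q)
    (h : S.SEF D p x y) : S.SEF D1 p x y := by
  have hDx := G.D_mem p x hx
  refine ⟨fun m => ?_, fun m => ?_⟩
  · rw [G.D1_eq hx, G.D1_eq hy, G.D1_eq (G.B_mem _ _ _ _ hDx hy m)]
    exact h.1 m
  · rw [G.D1_eq hx, G.D1_eq hy, G.D1_eq (G.B_mem _ _ _ _ hx hy m)]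
    exact h.2 m

theorem sef_circ_right (G : S.IsGhostExtension R D D1 circ) (hx : x ∈ R p) (hy : y ∈ R q)
    (h : S.SEF D p x y) : S.SEF D1 p x (circ y) := by
  have hDx := G.D_mem p x hx
  have hDy := G.D_mem q y hy
  have hlam := lam_eq_apply_lam (psgn p • circ ·) (by simp) (G.B_circ_right hx hy)
  refine ⟨fun m => ?_, fun m => ?_⟩
  · simp only [G.D1_eq hx, G.D1_circ hy, Pi.neg_apply,
      G.B_circ_right hDx hDy, h.1, G.B_circ_right hDx hy,
      G.D1_circ (G.B_mem _ _ _ _ hDx hy m), hlam,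
      map_add, map_neg, map_smul, smul_add, smul_neg, smul_smul,
      psgn_not, neg_mul, mul_neg, neg_neg, psgn_mul_self]
    module
  · simp only [G.D1_eq hx, G.D1_circ hy, Pi.neg_apply,
      G.B_circ_right hx hDy, h.2, G.B_circ_right hDx hy, G.B_circ_right hx hy,
      G.D1_circ (G.B_mem _ _ _ _ hx hy m),
      map_sub, map_neg, map_smul, smul_sub, smul_neg, smul_smul,
      psgn_not, neg_mul, mul_neg, neg_neg, psgn_mul_self]
    module

theorem sef_circ_left (G : S.IsGhostExtension R D D1 circ) (hx : x ∈ R p) (hy : y ∈ R q)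
    (h : S.SEF D p x y) : S.SEF D1 (!p) (circ x) y := by
  have hDx := G.D_mem p x hx
  have hDy := G.D_mem q y hy
  have hlam := lam_eq_apply_lam circ circ.map_zero (G.B_circ_left hx hy)
  refine ⟨fun m => ?_, fun m => ?_⟩
  · simp only [G.D1_circ hx, G.D1_eq hy, LinearMap.neg_apply, Pi.neg_apply,
      G.B_circ_left hDx hDy, h.1, G.B_circ_left hDx hy,
      G.D1_circ (G.B_mem _ _ _ _ hDx hy m), hlam,
      map_add, map_neg, map_smul, smul_add,
      psgn_not, neg_neg]
    module
  · simp only [G.D1_circ hx, G.D1_eq hy, LinearMap.neg_apply, Pi.neg_apply,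
      G.B_circ_left hx hDy, h.2, G.B_circ_left hDx hy, G.B_circ_left hx hy,
      G.D1_circ (G.B_mem _ _ _ _ hx hy m),
      map_sub, map_neg, map_smul, smul_sub, smul_neg,
      psgn_not, neg_neg]
    module

theorem sef_circ_circ (G : S.IsGhostExtension R D D1 circ) (hx : x ∈ R p) (hy : y ∈ R q)
    (r : Bool) : S.SEF D1 r (circ x) (circ y) := by
  have hDx := G.D_mem p x hx
  have hDy := G.D_mem q y hy
  refine ⟨fun m => ?_, fun m => ?_⟩
  · simp [G.D1_circ hx, G.D1_circ hy, G.B_circ_circ hDx hDy, G.B_circ_circ hDx hy,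
      G.B_circ_circ hx hy, lam_zero]
  · simp [G.D1_circ hx, G.D1_circ hy, G.B_circ_circ hx hDy, G.B_circ_circ hDx hy,
      G.B_circ_circ hx hy]

theorem sef_of_generators (G : S.IsGhostExtension R D D1 circ) {Rbar : Bool → Submodule ℂ V}
    (hsub : ∀ p, Rbar p ≤ R p) (hSEF : ∀ p x, x ∈ Rbar p → ∀ q y, y ∈ Rbar q → S.SEF D p x y) :
    ∀ (p : Bool) (x : V),
      (x ∈ Rbar p ∨ ∃ (q : Bool) (y : V), y ∈ Rbar q ∧ p = !q ∧ x = circ y) →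
      ∀ (p' : Bool) (x' : V),
      (x' ∈ Rbar p' ∨ ∃ (q' : Bool) (y' : V), y' ∈ Rbar q' ∧ p' = !q' ∧ x' = circ y') →
        S.SEF D1 p x x' := by
  rintro p x (hx | ⟨q, y, hy, rfl, rfl⟩) p' x' (hx' | ⟨q', y', hy', rfl, rfl⟩)
  · exact G.sef (hsub p hx) (hsub p' hx') (hSEF p x hx p' x' hx')
  · exact G.sef_circ_right (hsub p hx) (hsub q' hy') (hSEF p x hx q' y' hy')
  · exact G.sef_circ_left (hsub q hy) (hsub p' hx') (hSEF q y hy p' x' hx')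
  · exact G.sef_circ_circ (hsub q hy) (hsub q' hy') _

theorem sef_circ_right_unfold (G : S.IsGhostExtension R D D1 circ) (hx : x ∈ R p)
    (hy : y ∈ R q) (h : S.SEF D1 p x (circ y)) :
    (∀ m, S.B (D x) (circ (D y)) m
      = psgn p • (D1 (S.B (D x) (circ y) m) + lam (S.B x (circ y)) m)) ∧
    (∀ m, S.B x (circ (D y)) m
      = psgn p • (S.B (D x) (circ y) m - D1 (S.B x (circ y) m))) := by
  obtain ⟨h1, h2⟩ := h
  rw [G.D1_eq hx, G.D1_circ hy] at h1 h2
  exact ⟨fun m => neg_injective (by rw [← neg_smul, ← psgn_not, ← h1 m, map_neg]; rfl),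
    fun m => neg_injective (by rw [← neg_smul, ← psgn_not, ← h2 m, map_neg]; rfl)⟩

end IsGhostExtension

end LCAData

end VAx

theorem stmt_19_general {V : Type*} [AddCommGroup V] [Module ℂ V]
    (S : VAx.LCAData V)
    -- the graded pieces of R (full) and of its SUSY generator part R̄ = span{ū_i}:
    (Rfull Rbar : Bool → Submodule ℂ V)
    (hsub : ∀ p, Rbar p ≤ Rfull p)
    -- the N = 1 supersymmetry D of R:
    (D : Module.End ℂ V)
    (hDR : ∀ p x, x ∈ Rfull p → D x ∈ Rfull (!p))
    (hclose : ∀ p q x y, x ∈ Rfull p → y ∈ Rfull q → ∀ m, S.B x y m ∈ Rfull (xor p q))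
    (hSEF : ∀ p x, x ∈ Rbar p → ∀ q y, y ∈ Rbar q → S.SEF D p x y)
    -- the ghost copy x ↦ x° and its λ-brackets:
    (circ : V →ₗ[ℂ] V)
    (hc1 : ∀ (p : Bool) (x : V), x ∈ Rfull p → ∀ (q : Bool) (y : V), y ∈ Rfull q →
      ∀ m, S.B (circ x) y m = circ (S.B x y m) ∧
        S.B x (circ y) m = psgn p • circ (S.B x y m) ∧
        S.B (circ x) (circ y) m = 0)
    -- the odd endomorphisms D¹ and D² = D°:
    (D1 : Module.End ℂ V)
    (hD1 : ∀ (p : Bool) (x : V), x ∈ Rfull p → D1 x = D x ∧ D1 (circ x) = - circ (D x)) :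
    -- the pair ({ū_i, ū°_i}, D¹) satisfies (SEF1) and (SEF2):
    ((∀ (p : Bool) (x : V),
      (x ∈ Rbar p ∨ ∃ (q : Bool) (y : V), y ∈ Rbar q ∧ p = !q ∧ x = circ y) →
      ∀ (p' : Bool) (x' : V),
      (x' ∈ Rbar p' ∨ ∃ (q' : Bool) (y' : V), y' ∈ Rbar q' ∧ p' = !q' ∧ x' = circ y') →
        S.SEF D1 p x x')) ∧
    -- in particular, the two displayed identities:
    (∀ (p : Bool) (x : V), x ∈ Rbar p → ∀ (q : Bool) (y : V), y ∈ Rbar q →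
      (∀ m, S.B (D x) (circ (D y)) m
        = psgn p • (D1 (S.B (D x) (circ y) m) + lam (S.B x (circ y)) m)) ∧
      (∀ m, S.B x (circ (D y)) m
        = psgn p • (S.B (D x) (circ y) m - D1 (S.B x (circ y) m)))) := by
  have G : S.IsGhostExtension Rfull D D1 circ := ⟨hDR, hclose, hc1, hD1⟩
  have hsef := G.sef_of_generators hsub hSEF
  refine ⟨hsef, fun p x hx q y hy => G.sef_circ_right_unfold (hsub p hx) (hsub q hy) ?_⟩
  exact hsef p x (.inl hx) (!q) (circ y) (.inr ⟨q, y, hy, rfl, rfl⟩)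

/-- (Theorem 6.8.) Let `R_{N=1} = ℂ[D]⊗span{ū_i} ⊕ E_C` be an `N = 1` SUSY Lie
conformal algebra, viewed as a non-SUSY Lie conformal algebra `R` (with graded parts
`Rfull`, spanned by `u_i := Dū_i` and `ū_i`, the latter spanning `Rbar`) with SUSY generator
`{ū_i}` in the `D`-direction. Form `R̃ = R ⊕ R°` via the Theorem-5.4 construction, where the
ghost copy `x ↦ x°` (the parity-reversing map `circ`) satisfies `[x°_λ y] = [x_λ y]°`,
`[x_λ y°] = (-1)^{p(x)}[x_λ y]°`, `[x°_λ y°] = 0`, with `D°` the corresponding odd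
derivation. Define `D¹` by `D¹(x) = D(x)` and `D¹(x°) = (-D(x))°` on `R`, and `D² := D°`.
Then the pair `({ū_i, ū°_i}, D¹)` satisfies the supersymmetric extension formulas (SEF1) and
(SEF2); in particular
`[u_i _λ u°_j] = (-1)^{p(u_i)+1}(D¹[u_i _λ ū°_j] + λ[ū_i _λ ū°_j])` and
`[ū_i _λ u°_j] = (-1)^{p(u_i)+1}([u_i _λ ū°_j] - D¹[ū_i _λ ū°_j])`. -/
theorem stmt_19 {V : Type*} [AddCommGroup V] [Module ℂ V]
    (S : VAx.LCAData V)
    (hsq1 : ∀ a b, S.B (S.der a) b 0 = 0 ∧ ∀ m, S.B (S.der a) b (m + 1) = - S.B a b m)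
    (hsq2 : ∀ a b, S.B a (S.der b) 0 = S.der (S.B a b 0) ∧
      ∀ m, S.B a (S.der b) (m + 1) = S.der (S.B a b (m + 1)) + S.B a b m)
    -- the graded pieces of R (full) and of its SUSY generator part R̄ = span{ū_i}:
    (Rfull Rbar : Bool → Submodule ℂ V)
    (hsub : ∀ p, Rbar p ≤ Rfull p)
    -- the N = 1 supersymmetry D of R:
    (D : Module.End ℂ V) (hDD : ∀ x, D (D x) = S.der x)
    (hDR : ∀ p x, x ∈ Rfull p → D x ∈ Rfull (!p))
    (hderR : ∀ p x, x ∈ Rfull p → S.der x ∈ Rfull p)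
    (hclose : ∀ p q x y, x ∈ Rfull p → y ∈ Rfull q → ∀ m, S.B x y m ∈ Rfull (xor p q))
    (hSEF : ∀ p x, x ∈ Rbar p → ∀ q y, y ∈ Rbar q → S.SEF D p x y)
    -- the ghost copy x ↦ x° and its λ-brackets:
    (circ : V →ₗ[ℂ] V) (hcircder : ∀ x, circ (S.der x) = S.der (circ x))
    (hc1 : ∀ (p : Bool) (x : V), x ∈ Rfull p → ∀ (q : Bool) (y : V), y ∈ Rfull q →
      ∀ m, S.B (circ x) y m = circ (S.B x y m) ∧
        S.B x (circ y) m = psgn p • circ (S.B x y m) ∧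
        S.B (circ x) (circ y) m = 0)
    -- the odd endomorphisms D¹ and D² = D°:
    (D1 D2 : Module.End ℂ V)
    (hD1 : ∀ (p : Bool) (x : V), x ∈ Rfull p → D1 x = D x ∧ D1 (circ x) = - circ (D x))
    (hD2 : ∀ (p : Bool) (x : V), x ∈ Rfull p → D2 (circ x) = x ∧ D2 x = S.der (circ x))
    (h11 : ∀ x, D1 (D1 x) = S.der x) (h22 : ∀ x, D2 (D2 x) = S.der x)
    (h12 : ∀ x, D1 (D2 x) + D2 (D1 x) = 0) :
    -- the pair ({ū_i, ū°_i}, D¹) satisfies (SEF1) and (SEF2):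
    ((∀ (p : Bool) (x : V),
      (x ∈ Rbar p ∨ ∃ (q : Bool) (y : V), y ∈ Rbar q ∧ p = !q ∧ x = circ y) →
      ∀ (p' : Bool) (x' : V),
      (x' ∈ Rbar p' ∨ ∃ (q' : Bool) (y' : V), y' ∈ Rbar q' ∧ p' = !q' ∧ x' = circ y') →
        S.SEF D1 p x x')) ∧
    -- in particular, the two displayed identities:
    (∀ (p : Bool) (x : V), x ∈ Rbar p → ∀ (q : Bool) (y : V), y ∈ Rbar q →
      (∀ m, S.B (D x) (circ (D y)) m
        = psgn p • (D1 (S.B (D x) (circ y) m) + lam (S.B x (circ y)) m)) ∧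
      (∀ m, S.B x (circ (D y)) m
        = psgn p • (S.B (D x) (circ y) m - D1 (S.B x (circ y) m)))) :=
  stmt_19_general S Rfull Rbar hsub D hDR hclose hSEF circ hc1 D1 hD1
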